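/- Let 1 < p ≤ q < ∞. There exists C > 0 such that for every x ∈ ℓ^p_q(ℤ^d), Mx ∈ ℓ^p_q(ℤ^d) and ‖Mx‖_{ℓ^p_q(ℤ^d)} ≤ C ‖x‖_{ℓ^p_q(ℤ^d)}. (Boundedness of the discrete Hardy–Littlewood maximal operator on discrete Morrey spaces.) -/

import Mathlib

open scoped BigOperators ENNReal

noncomputable section

/-- The discrete cube `S_{m,N} = {k : ‖k - m‖_∞ ≤ N}` in `ℤ^d`. -/
def cubeS (d : ℕ) (m : Fin d → ℤ) (N : ℕ) : Finset (Fin d → ℤ) :=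
  Finset.Icc (fun i => m i - N) (fun i => m i + N)

/-- `R_{m,N}`: the cube `S_{m,N}` with points having some coordinate `m i + N` removed. -/
def cubeR (d : ℕ) (m : Fin d → ℤ) (N : ℕ) : Finset (Fin d → ℤ) :=
  Finset.Ico (fun i => m i - N) (fun i => m i + N)

/-- The sup-norm `‖k‖_∞` of a point of `ℤ^d`, as a natural number. -/
def snorm' (d : ℕ) (k : Fin d → ℤ) : ℕ :=
  Finset.univ.sup fun i => (k i).natAbs

/-- The (centered, odd) discrete Hardy–Littlewood maximal operator. -/
def maxOp (d : ℕ) (x : (Fin d → ℤ) → ℝ) (m : Fin d → ℤ) : ℝ :=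
  ⨆ N : ℕ, (∑ k ∈ cubeS d m N, |x k|) / (2 * N + 1) ^ d

/-- The discrete Morrey norm `‖x‖_{ℓ^p_q(ℤ^d)}`. -/
def morreyNorm (d : ℕ) (p q : ℝ) (x : (Fin d → ℤ) → ℝ) : ℝ :=
  ⨆ mN : (Fin d → ℤ) × ℕ,
    (((2 * mN.2 + 1 : ℝ) ^ d) ^ (1 / q - 1 / p)) *
      (∑ k ∈ cubeS d mN.1 mN.2, |x k| ^ p) ^ (1 / p)

/-- Membership in the discrete Morrey space: the defining supremum is finite. -/
def MemMorrey (d : ℕ) (p q : ℝ) (x : (Fin d → ℤ) → ℝ) : Prop :=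
  BddAbove (Set.range fun mN : (Fin d → ℤ) × ℕ =>
    (((2 * mN.2 + 1 : ℝ) ^ d) ^ (1 / q - 1 / p)) *
      (∑ k ∈ cubeS d mN.1 mN.2, |x k| ^ p) ^ (1 / p))

/-!
On a cube `S = S_{m,N}` write `x` as its restriction `y` to the doubled cube `S_{m,2N}` plus the
rest. A cube centred in `S` of radius `L ≤ N` lies in the doubled cube, so its average of `|x|`
is at most `My`; a cube of radius `L > N` is large, and Hölder's inequality bounds its average by
`(2N+1)^{-d/q} ‖x‖`. The maximal operator is bounded on `ℓ^p`: a Vitali-type selection of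
cubes (always keep one of largest radius) gives the weak `(1,1)` estimate with constant `2^{d+1}`,
and the layer-cake formula `a^p = ∫₀^a p t^{p-1} dt` turns it into an `ℓ^p` bound. Hence
`‖Mx‖_{ℓ^p(S)} ≲ ‖y‖_{ℓ^p} + (2N+1)^{d/p - d/q} ‖x‖ ≲ (2N+1)^{d(1/p-1/q)} ‖x‖`, which is the
Morrey scaling.
-/

open Finset MeasureTheory

def cubeAvg (d : ℕ) (x : (Fin d → ℤ) → ℝ) (m : Fin d → ℤ) (N : ℕ) : ℝ :=
  (∑ k ∈ cubeS d m N, |x k|) / (2 * N + 1) ^ d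

def morreyTerm (d : ℕ) (p q : ℝ) (x : (Fin d → ℤ) → ℝ) (m : Fin d → ℤ) (N : ℕ) : ℝ :=
  ((2 * N + 1 : ℝ) ^ d) ^ (1 / q - 1 / p) * (∑ k ∈ cubeS d m N, |x k| ^ p) ^ (1 / p)

def maxOpLpConst (d : ℕ) (p : ℝ) : ℝ :=
  2 ^ (d + 1) * 2 ^ (p - 1) * p / (p - 1)

section Cubes

variable {d : ℕ}

theorem mem_cubeS {m k : Fin d → ℤ} {N : ℕ} :
    k ∈ cubeS d m N ↔ ∀ i, m i - N ≤ k i ∧ k i ≤ m i + N := by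
  simp [cubeS, Pi.le_def, forall_and]

theorem self_mem_cubeS (m : Fin d → ℤ) (N : ℕ) : m ∈ cubeS d m N :=
  mem_cubeS.2 fun i => by omega

theorem card_cubeS (m : Fin d → ℤ) (N : ℕ) : (#(cubeS d m N) : ℝ) = (2 * N + 1) ^ d := by
  have h : ∀ i : Fin d, #(Icc (m i - N) (m i + N)) = 2 * N + 1 := fun i => by
    rw [Int.card_Icc]; omega
  simp [cubeS, Pi.card_Icc, h]

theorem cubeS_subset_cubeS_two_mul {m k : Fin d → ℤ} {N L : ℕ} (hk : k ∈ cubeS d m N)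
    (hL : L ≤ N) : cubeS d k L ⊆ cubeS d m (2 * N) := by
  intro j hj
  rw [mem_cubeS] at *
  intro i
  have := hk i
  have := hj i
  omega

theorem disjoint_cubeS {k₀ k : Fin d → ℤ} {L₀ L : ℕ} (hk : k ∉ cubeS d k₀ (2 * L₀))
    (hL : L ≤ L₀) : Disjoint (cubeS d k L) (cubeS d k₀ L₀) := by
  refine disjoint_left.2 fun j hj hj₀ => hk ?_
  rw [mem_cubeS] at *
  intro i
  have := hj i
  have := hj₀ i
  omega

theorem one_le_cubeVol (N : ℕ) : (1 : ℝ) ≤ (2 * N + 1) ^ d :=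
  one_le_pow₀ (by linarith [(N.cast_nonneg : (0 : ℝ) ≤ N)])

theorem cubeVol_two_mul_le (N : ℕ) :
    (2 * ((2 * N : ℕ) : ℝ) + 1) ^ d ≤ 2 ^ d * (2 * N + 1) ^ d := by
  rw [← mul_pow]
  gcongr
  push_cast
  linarith

theorem rpow_cubeVol_two_mul_le (N : ℕ) {e : ℝ} (he₀ : 0 ≤ e) (he₁ : e ≤ 1) :
    ((2 * ((2 * N : ℕ) : ℝ) + 1) ^ d) ^ e ≤ 2 ^ d * ((2 * N + 1 : ℝ) ^ d) ^ e := by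
  calc ((2 * ((2 * N : ℕ) : ℝ) + 1) ^ d) ^ e ≤ (2 ^ d * (2 * N + 1 : ℝ) ^ d) ^ e := by
        gcongr
        exact cubeVol_two_mul_le N
    _ = ((2 : ℝ) ^ d) ^ e * ((2 * N + 1 : ℝ) ^ d) ^ e :=
        Real.mul_rpow (by positivity) (by positivity)
    _ ≤ 2 ^ d * ((2 * N + 1 : ℝ) ^ d) ^ e := by
        gcongr
        exact Real.rpow_le_self_of_one_le (one_le_pow₀ one_le_two) he₁

end Cubes

section MaximalOperator

variable {d : ℕ}

theorem maxOp_nonneg (x : (Fin d → ℤ) → ℝ) (m : Fin d → ℤ) : 0 ≤ maxOp d x m :=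
  Real.iSup_nonneg fun _ => by positivity

theorem abs_maxOp (x : (Fin d → ℤ) → ℝ) (m : Fin d → ℤ) : |maxOp d x m| = maxOp d x m :=
  abs_of_nonneg (maxOp_nonneg x m)

theorem maxOp_le {x : (Fin d → ℤ) → ℝ} {m : Fin d → ℤ} {c : ℝ} (h : ∀ N, cubeAvg d x m N ≤ c) :
    maxOp d x m ≤ c :=
  ciSup_le h

theorem cubeAvg_le_maxOp {y : (Fin d → ℤ) → ℝ} {A : Finset (Fin d → ℤ)} (hA : ∀ j ∉ A, y j = 0)
    (m : Fin d → ℤ) (N : ℕ) : cubeAvg d y m N ≤ maxOp d y m := by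
  refine le_ciSup ⟨∑ j ∈ A, |y j|, ?_⟩ N
  rintro _ ⟨L, rfl⟩
  calc cubeAvg d y m L ≤ ∑ k ∈ cubeS d m L, |y k| :=
        div_le_self (sum_nonneg fun _ _ => abs_nonneg _) (one_le_cubeVol L)
    _ = ∑ k ∈ cubeS d m L ∩ A, |y k| := by
        rw [← sum_ite_mem]
        exact sum_congr rfl fun k _ => by split_ifs with hk <;> simp [hA k, hk]
    _ ≤ ∑ j ∈ A, |y j| :=
        sum_le_sum_of_subset_of_nonneg inter_subset_right fun _ _ _ => abs_nonneg _

/-- Vitali-type covering lemma: at most `2^d (2L₀+1)^d` of the centres lie in the doubled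
cube of a largest cube `S_{k₀,L₀}`, and all other cubes miss `S_{k₀,L₀}`. -/
theorem mul_card_le_of_lt_sum_cubeS {x : (Fin d → ℤ) → ℝ} (hx : ∀ j, 0 ≤ x j) {lam : ℝ}
    (hlam : 0 ≤ lam) (L : (Fin d → ℤ) → ℕ) (T A : Finset (Fin d → ℤ))
    (hT : ∀ k ∈ T, lam * (2 * L k + 1) ^ d < ∑ j ∈ cubeS d k (L k) ∩ A, x j) :
    lam * #T ≤ 2 ^ d * ∑ j ∈ A, x j := by
  induction T using Finset.strongInduction generalizing A with
  | H T ih =>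
  rcases T.eq_empty_or_nonempty with rfl | hne
  · simpa using mul_nonneg (pow_nonneg zero_le_two d) (sum_nonneg fun j _ => hx j)
  obtain ⟨k₀, hk₀, hmax⟩ := T.exists_max_image L hne
  set S₀ := cubeS d k₀ (L k₀)
  set B := cubeS d k₀ (2 * L k₀)
  have hfar : lam * #(T \ B) ≤ 2 ^ d * ∑ j ∈ A \ S₀, x j := by
    refine ih _ ((ssubset_iff_of_subset sdiff_subset).2
      ⟨k₀, hk₀, fun h => (mem_sdiff.1 h).2 (self_mem_cubeS _ _)⟩) _ fun k hk => ?_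
    obtain ⟨hkT, hkB⟩ := mem_sdiff.1 hk
    have hdisj := (disjoint_cubeS hkB (hmax k hkT)).mono_left (inter_subset_left (s₂ := A))
    rw [← inter_sdiff_assoc, sdiff_eq_self_of_disjoint hdisj]
    exact hT k hkT
  have hnear : lam * #(T ∩ B) ≤ 2 ^ d * ∑ j ∈ A ∩ S₀, x j := by
    have hcard : (#(T ∩ B) : ℝ) ≤ 2 ^ d * (2 * L k₀ + 1) ^ d :=
      calc (#(T ∩ B) : ℝ) ≤ #B := by exact_mod_cast card_le_card inter_subset_right
        _ ≤ 2 ^ d * (2 * L k₀ + 1) ^ d := (card_cubeS _ _).trans_le (cubeVol_two_mul_le _)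
    calc lam * #(T ∩ B) ≤ 2 ^ d * (lam * (2 * L k₀ + 1) ^ d) := by
          rw [mul_left_comm]; gcongr
      _ ≤ 2 ^ d * ∑ j ∈ A ∩ S₀, x j := by
          rw [inter_comm]; gcongr; exact (hT k₀ hk₀).le
  calc lam * #T = lam * #(T \ B) + lam * #(T ∩ B) := by
        rw [← card_sdiff_add_card_inter T B]; push_cast; ring
    _ ≤ 2 ^ d * ∑ j ∈ A \ S₀, x j + 2 ^ d * ∑ j ∈ A ∩ S₀, x j := add_le_add hfar hnear
    _ = 2 ^ d * ∑ j ∈ A, x j := by rw [← mul_add, add_comm, sum_inter_add_sum_sdiff]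

theorem mul_card_le_of_lt_maxOp {y : (Fin d → ℤ) → ℝ} {A T : Finset (Fin d → ℤ)} {t : ℝ}
    (hA : ∀ j ∉ A, y j = 0) (ht : 0 < t) (hT : ∀ k ∈ T, t < maxOp d y k) :
    t * #T ≤ 2 ^ (d + 1) * ∑ j ∈ A with t < 2 * |y j|, |y j| := by
  set B := {j ∈ A | t < 2 * |y j|}
  have hsmall : ∀ j, |y j| ≤ (if j ∈ B then |y j| else 0) + t / 2 := by
    intro j
    split_ifs with hj
    · linarith
    · by_cases hjA : j ∈ A
      · have : ¬t < 2 * |y j| := fun h => hj (mem_filter.2 ⟨hjA, h⟩)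
        linarith
      · simp only [hA j hjA, abs_zero]; linarith
  have hcube : ∀ k ∈ T, ∃ L : ℕ, t / 2 * (2 * L + 1) ^ d < ∑ j ∈ cubeS d k L ∩ B, |y j| := by
    intro k hk
    obtain ⟨L, hL⟩ := exists_lt_of_lt_ciSup (hT k hk)
    rw [lt_div_iff₀ (zero_lt_one.trans_le (one_le_cubeVol L))] at hL
    refine ⟨L, ?_⟩
    have : ∑ j ∈ cubeS d k L, |y j| ≤ ∑ j ∈ cubeS d k L ∩ B, |y j| + t / 2 * (2 * L + 1) ^ d :=
      calc ∑ j ∈ cubeS d k L, |y j|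
          ≤ ∑ j ∈ cubeS d k L, ((if j ∈ B then |y j| else 0) + t / 2) :=
            sum_le_sum fun j _ => hsmall j
        _ = _ := by rw [sum_add_distrib, sum_ite_mem, sum_const, nsmul_eq_mul, card_cubeS]; ring
    linarith
  choose! L hL using hcube
  have := mul_card_le_of_lt_sum_cubeS (fun j => abs_nonneg (y j)) (by positivity) L T B hL
  rw [pow_succ]
  linarith

end MaximalOperator

section LayerCake

theorem integrable_indicator_Ioo_rpow (a : ℝ) {r : ℝ} (hr : -1 < r) :
    Integrable ((Set.Ioo 0 a).indicator fun t : ℝ => t ^ r) := by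
  rw [integrable_indicator_iff measurableSet_Ioo]
  exact (intervalIntegral.intervalIntegrable_rpow' hr).1.mono_set Set.Ioo_subset_Ioc_self

theorem integral_indicator_Ioo_rpow {a r : ℝ} (ha : 0 ≤ a) (hr : -1 < r) :
    ∫ t, (Set.Ioo 0 a).indicator (fun t : ℝ => t ^ r) t = a ^ (r + 1) / (r + 1) := by
  rw [integral_indicator measurableSet_Ioo, ← integral_Ioc_eq_integral_Ioo,
    ← intervalIntegral.integral_of_le ha, integral_rpow (Or.inl hr),
    Real.zero_rpow (by linarith), sub_zero]

/-- Marcinkiewicz interpolation, through the layer-cake formula `a^p = ∫₀^a p t^{p-1} dt`. -/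
theorem sum_rpow_le_of_weak_type {ι κ : Type*} {T : Finset ι} {A : Finset κ} {f : ι → ℝ}
    {g : κ → ℝ} (hf : ∀ k, 0 ≤ f k) (hg : ∀ j, 0 ≤ g j) {p K : ℝ} (hp : 1 < p)
    (hweak : ∀ t, 0 < t → t * #{k ∈ T | t < f k} ≤ K * ∑ j ∈ A with t < 2 * g j, g j) :
    ∑ k ∈ T, f k ^ p ≤ K * 2 ^ (p - 1) * p / (p - 1) * ∑ j ∈ A, g j ^ p := by
  set Φ : ι → ℝ → ℝ := fun k t => p * (Set.Ioo 0 (f k)).indicator (fun t => t ^ (p - 1)) t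
  set Ψ : κ → ℝ → ℝ := fun j t =>
    K * p * g j * (Set.Ioo 0 (2 * g j)).indicator (fun t => t ^ (p - 2)) t
  have hΦ : ∀ k, Integrable (Φ k) := fun k =>
    (integrable_indicator_Ioo_rpow _ (by linarith)).const_mul p
  have hΨ : ∀ j, Integrable (Ψ j) := fun j =>
    (integrable_indicator_Ioo_rpow _ (by linarith)).const_mul _
  have hΦ_eq : ∀ k, ∫ t, Φ k t = f k ^ p := fun k => by
    rw [integral_const_mul, integral_indicator_Ioo_rpow (hf k) (by linarith), sub_add_cancel,
      mul_div_cancel₀ _ (by linarith)]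
  have hΨ_eq : ∀ j, ∫ t, Ψ j t = K * 2 ^ (p - 1) * p / (p - 1) * g j ^ p := fun j => by
    have hgp : g j ^ p = g j ^ (p - 1) * g j := by
      rw [← Real.rpow_add_one' (hg j) (by linarith), sub_add_cancel]
    rw [integral_const_mul, integral_indicator_Ioo_rpow (by linarith [hg j]) (by linarith),
      show p - 2 + 1 = p - 1 by ring, Real.mul_rpow zero_le_two (hg j), hgp]
    field_simp
  have hpt : ∀ t, ∑ k ∈ T, Φ k t ≤ ∑ j ∈ A, Ψ j t := by
    intro t
    rcases le_or_gt t 0 with ht | ht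
    · simp [Φ, Ψ, Set.indicator_apply, ht.not_gt]
    have hsplit : t ^ (p - 1) = t ^ (p - 2) * t := by
      rw [← Real.rpow_add_one ht.ne', show p - 2 + 1 = p - 1 by ring]
    simp only [Φ, Ψ, Set.indicator_apply, Set.mem_Ioo, ht, true_and, mul_ite, mul_zero]
    rw [← sum_filter, ← sum_filter, sum_const, nsmul_eq_mul, ← sum_mul, hsplit]
    calc (#{k ∈ T | t < f k} : ℝ) * (p * (t ^ (p - 2) * t))
        = p * t ^ (p - 2) * (t * #{k ∈ T | t < f k}) := by ring
      _ ≤ p * t ^ (p - 2) * (K * ∑ j ∈ A with t < 2 * g j, g j) := 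
          mul_le_mul_of_nonneg_left (hweak t ht) (by positivity)
      _ = (∑ j ∈ A with t < 2 * g j, K * p * g j) * t ^ (p - 2) := by
          rw [← mul_sum]; ring
  calc ∑ k ∈ T, f k ^ p = ∫ t, ∑ k ∈ T, Φ k t := by
        rw [integral_finsetSum _ fun k _ => hΦ k]
        exact sum_congr rfl fun k _ => (hΦ_eq k).symm
    _ ≤ ∫ t, ∑ j ∈ A, Ψ j t :=
        integral_mono (integrable_finsetSum _ fun k _ => hΦ k)
          (integrable_finsetSum _ fun j _ => hΨ j) hpt
    _ = _ := by
        rw [integral_finsetSum _ fun j _ => hΨ j, mul_sum]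
        exact sum_congr rfl fun j _ => hΨ_eq j

end LayerCake

section Morrey

variable {d : ℕ} {p q : ℝ} {x : (Fin d → ℤ) → ℝ}

theorem maxOpLpConst_pos (hp : 1 < p) : 0 < maxOpLpConst d p := by
  have : 0 < (2 : ℝ) ^ (p - 1) := Real.rpow_pos_of_pos two_pos _
  have : 0 < p - 1 := by linarith
  unfold maxOpLpConst
  positivity

theorem sum_maxOp_rpow_le (hp : 1 < p) {y : (Fin d → ℤ) → ℝ} {A : Finset (Fin d → ℤ)}
    (hA : ∀ j ∉ A, y j = 0) (T : Finset (Fin d → ℤ)) :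
    ∑ k ∈ T, maxOp d y k ^ p ≤ maxOpLpConst d p * ∑ j ∈ A, |y j| ^ p :=
  sum_rpow_le_of_weak_type (maxOp_nonneg y) (fun j => abs_nonneg (y j)) hp fun _ ht =>
    mul_card_le_of_lt_maxOp hA ht fun _ hk => (mem_filter.1 hk).2

theorem morreyNorm_nonneg : 0 ≤ morreyNorm d p q x :=
  Real.iSup_nonneg fun _ => by positivity

theorem morreyTerm_le_morreyNorm (hx : MemMorrey d p q x) (m : Fin d → ℤ) (N : ℕ) :
    morreyTerm d p q x m N ≤ morreyNorm d p q x :=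
  le_ciSup hx (m, N)

theorem memMorrey_of_morreyTerm_le {B : ℝ} (h : ∀ m N, morreyTerm d p q x m N ≤ B) :
    MemMorrey d p q x ∧ morreyNorm d p q x ≤ B :=
  ⟨⟨B, by rintro _ ⟨mN, rfl⟩; exact h mN.1 mN.2⟩, ciSup_le fun mN => h mN.1 mN.2⟩

theorem rpow_sum_le_morreyNorm (hx : MemMorrey d p q x) (m : Fin d → ℤ) (N : ℕ) :
    (∑ k ∈ cubeS d m N, |x k| ^ p) ^ (1 / p)
      ≤ ((2 * N + 1 : ℝ) ^ d) ^ (1 / p - 1 / q) * morreyNorm d p q x := by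
  have hn : (0 : ℝ) < (2 * N + 1) ^ d := zero_lt_one.trans_le (one_le_cubeVol N)
  calc (∑ k ∈ cubeS d m N, |x k| ^ p) ^ (1 / p)
      = ((2 * N + 1 : ℝ) ^ d) ^ (1 / p - 1 / q) * morreyTerm d p q x m N := by
        rw [morreyTerm, ← mul_assoc, ← Real.rpow_add hn,
          show 1 / p - 1 / q + (1 / q - 1 / p) = 0 by ring, Real.rpow_zero, one_mul]
    _ ≤ _ := by gcongr; exact morreyTerm_le_morreyNorm hx m N

theorem cubeAvg_le_morreyNorm (hp : 1 ≤ p) (hx : MemMorrey d p q x) (k : Fin d → ℤ) (L : ℕ) :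
    cubeAvg d x k L ≤ ((2 * L + 1 : ℝ) ^ d) ^ (-(1 / q)) * morreyNorm d p q x := by
  set n : ℝ := (2 * L + 1) ^ d
  have hn : 0 < n := zero_lt_one.trans_le (one_le_cubeVol L)
  have hjensen := Real.arith_mean_le_rpow_mean (cubeS d k L) (fun _ => n⁻¹) (fun j => |x j|)
    (fun _ _ => by positivity)
    (by rw [sum_const, nsmul_eq_mul, card_cubeS]; exact mul_inv_cancel₀ hn.ne')
    (fun _ _ => abs_nonneg _) hp
  rw [← mul_sum, inv_mul_eq_div, ← mul_sum] at hjensen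
  calc cubeAvg d x k L ≤ (n⁻¹ * ∑ j ∈ cubeS d k L, |x j| ^ p) ^ (1 / p) := hjensen
    _ = n ^ (-(1 / p)) * (∑ j ∈ cubeS d k L, |x j| ^ p) ^ (1 / p) := by
        rw [Real.mul_rpow (by positivity) (by positivity), Real.inv_rpow hn.le,
          Real.rpow_neg hn.le]
    _ ≤ n ^ (-(1 / p)) * (n ^ (1 / p - 1 / q) * morreyNorm d p q x) := by
        gcongr; exact rpow_sum_le_morreyNorm hx k L
    _ = n ^ (-(1 / q)) * morreyNorm d p q x := by
        rw [← mul_assoc, ← Real.rpow_add hn, show -(1 / p) + (1 / p - 1 / q) = -(1 / q) by ring]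

theorem maxOp_le_maxOp_restrict_add (hp : 1 ≤ p) (hq : 0 ≤ q) (hx : MemMorrey d p q x)
    {m k : Fin d → ℤ} {N : ℕ} (hk : k ∈ cubeS d m N) :
    maxOp d x k ≤ maxOp d (fun j => if j ∈ cubeS d m (2 * N) then x j else 0) k
      + ((2 * N + 1 : ℝ) ^ d) ^ (-(1 / q)) * morreyNorm d p q x := by
  set y : (Fin d → ℤ) → ℝ := fun j => if j ∈ cubeS d m (2 * N) then x j else 0
  refine maxOp_le fun L => ?_
  rcases le_or_gt L N with hL | hL
  · have hlocal : cubeAvg d x k L = cubeAvg d y k L := by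
      unfold cubeAvg
      congr 1
      exact sum_congr rfl fun j hj => by simp [y, cubeS_subset_cubeS_two_mul hk hL hj]
    have := cubeAvg_le_maxOp (y := y) (A := cubeS d m (2 * N)) (fun j hj => by simp [y, hj]) k L
    have : 0 ≤ ((2 * N + 1 : ℝ) ^ d) ^ (-(1 / q)) * morreyNorm d p q x :=
      mul_nonneg (by positivity) morreyNorm_nonneg
    linarith
  · calc cubeAvg d x k L ≤ ((2 * L + 1 : ℝ) ^ d) ^ (-(1 / q)) * morreyNorm d p q x :=
          cubeAvg_le_morreyNorm hp hx k L
      _ ≤ ((2 * N + 1 : ℝ) ^ d) ^ (-(1 / q)) * morreyNorm d p q x := by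
          gcongr ?_ * _
          · exact morreyNorm_nonneg
          · refine Real.rpow_le_rpow_of_nonpos (zero_lt_one.trans_le (one_le_cubeVol N))
              (by gcongr) (by simp only [one_div, Left.neg_nonpos_iff, inv_nonneg]; exact hq)
      _ ≤ _ := le_add_of_nonneg_left (maxOp_nonneg _ _)

theorem rpow_sum_maxOp_restrict_le (hp : 1 < p) (hpq : p ≤ q) (hx : MemMorrey d p q x)
    (m : Fin d → ℤ) (N : ℕ) :
    (∑ k ∈ cubeS d m N,
        |maxOp d (fun j => if j ∈ cubeS d m (2 * N) then x j else 0) k| ^ p) ^ (1 / p)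
      ≤ maxOpLpConst d p ^ (1 / p) * 2 ^ d * ((2 * N + 1 : ℝ) ^ d) ^ (1 / p - 1 / q)
        * morreyNorm d p q x := by
  set y : (Fin d → ℤ) → ℝ := fun j => if j ∈ cubeS d m (2 * N) then x j else 0
  have hlp : ∑ k ∈ cubeS d m N, |maxOp d y k| ^ p
      ≤ maxOpLpConst d p * ∑ j ∈ cubeS d m (2 * N), |x j| ^ p := by
    simp only [abs_maxOp]
    exact (sum_maxOp_rpow_le hp (A := cubeS d m (2 * N)) (fun j hj => by simp [y, hj]) _).trans_eq
      (congrArg _ (sum_congr rfl fun j hj => by simp [y, hj]))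
  have he₀ : 0 ≤ 1 / p - 1 / q := sub_nonneg.2 (one_div_le_one_div_of_le (by linarith) hpq)
  have he₁ : 1 / p - 1 / q ≤ 1 := by
    have : 1 / p ≤ 1 := (div_le_one (by linarith)).2 hp.le
    have : 0 ≤ 1 / q := by simp only [one_div, inv_nonneg]; linarith
    linarith
  have hC := (maxOpLpConst_pos (d := d) hp).le
  calc _ ≤ (maxOpLpConst d p * ∑ j ∈ cubeS d m (2 * N), |x j| ^ p) ^ (1 / p) :=
        Real.rpow_le_rpow (by positivity) hlp (by positivity)
    _ = maxOpLpConst d p ^ (1 / p) * (∑ j ∈ cubeS d m (2 * N), |x j| ^ p) ^ (1 / p) :=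
        Real.mul_rpow hC (by positivity)
    _ ≤ maxOpLpConst d p ^ (1 / p) *
          (((2 * ((2 * N : ℕ) : ℝ) + 1) ^ d) ^ (1 / p - 1 / q) * morreyNorm d p q x) := by
        gcongr; exact rpow_sum_le_morreyNorm hx m (2 * N)
    _ ≤ maxOpLpConst d p ^ (1 / p) *
          (2 ^ d * ((2 * N + 1 : ℝ) ^ d) ^ (1 / p - 1 / q) * morreyNorm d p q x) := by
        gcongr
        · exact morreyNorm_nonneg
        · exact rpow_cubeVol_two_mul_le N he₀ he₁
    _ = _ := by ring

theorem morreyTerm_maxOp_le (hp : 1 < p) (hpq : p ≤ q) (hx : MemMorrey d p q x)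
    (m : Fin d → ℤ) (N : ℕ) :
    morreyTerm d p q (maxOp d x) m N
      ≤ (maxOpLpConst d p ^ (1 / p) * 2 ^ d + 1) * morreyNorm d p q x := by
  set y : (Fin d → ℤ) → ℝ := fun j => if j ∈ cubeS d m (2 * N) then x j else 0
  set n : ℝ := (2 * N + 1) ^ d
  set X := morreyNorm d p q x
  have hn : 0 < n := zero_lt_one.trans_le (one_le_cubeVol N)
  set c := n ^ (-(1 / q)) * X
  have hc : 0 ≤ c := mul_nonneg (by positivity) morreyNorm_nonneg
  have hsplit : (∑ k ∈ cubeS d m N, |maxOp d x k| ^ p) ^ (1 / p)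
      ≤ (∑ k ∈ cubeS d m N, |maxOp d y k| ^ p) ^ (1 / p)
        + (∑ _k ∈ cubeS d m N, |c| ^ p) ^ (1 / p) := by
    refine le_trans ?_ (Real.Lp_add_le _ _ _ hp.le)
    gcongr with k hk
    · exact maxOp_nonneg x k
    · exact maxOp_le_maxOp_restrict_add hp.le (by linarith) hx hk
  have htail : (∑ _k ∈ cubeS d m N, |c| ^ p) ^ (1 / p) = n ^ (1 / p - 1 / q) * X := by
    rw [sum_const, nsmul_eq_mul, card_cubeS, abs_of_nonneg hc,
      Real.mul_rpow hn.le (by positivity), ← Real.rpow_mul hc, mul_one_div_cancel (by linarith),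
      Real.rpow_one, ← mul_assoc, ← Real.rpow_add hn, sub_eq_add_neg]
  have hcancel : n ^ (1 / q - 1 / p) * n ^ (1 / p - 1 / q) = 1 := by
    rw [← Real.rpow_add hn, show 1 / q - 1 / p + (1 / p - 1 / q) = 0 by ring, Real.rpow_zero]
  calc morreyTerm d p q (maxOp d x) m N
      = n ^ (1 / q - 1 / p) * (∑ k ∈ cubeS d m N, |maxOp d x k| ^ p) ^ (1 / p) := rfl
    _ ≤ n ^ (1 / q - 1 / p) * (maxOpLpConst d p ^ (1 / p) * 2 ^ d * n ^ (1 / p - 1 / q) * X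
          + n ^ (1 / p - 1 / q) * X) := by
        gcongr
        exact hsplit.trans (add_le_add (rpow_sum_maxOp_restrict_le hp hpq hx m N) htail.le)
    _ = _ := by linear_combination (maxOpLpConst d p ^ (1 / p) * 2 ^ d * X + X) * hcancel

end Morrey

/-- boundedness of the discrete Hardy–Littlewood maximal operator
on discrete Morrey spaces. -/
theorem maxOp_bounded_on_morrey (d : ℕ) (p q : ℝ) (hp : 1 < p) (hpq : p ≤ q) :
    ∃ C : ℝ, 0 < C ∧ ∀ x : (Fin d → ℤ) → ℝ, MemMorrey d p q x →
      MemMorrey d p q (fun m => maxOp d x m) ∧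
      morreyNorm d p q (fun m => maxOp d x m) ≤ C * morreyNorm d p q x :=
  ⟨maxOpLpConst d p ^ (1 / p) * 2 ^ d + 1,
    by have := maxOpLpConst_pos (d := d) hp; positivity,
    fun _ hx => memMorrey_of_morreyTerm_le fun m N => morreyTerm_maxOp_le hp hpq hx m N⟩
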